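/- arXiv:1602.02708 — 6 statements merged into one kernel-verified Lean document; each statement's English description precedes it below -/
import Mathlib

section
/- Let X be a finite set with |X| = n and let a : X × X → ℂ be any matrix with zero diagonal. Then (2π)^{-n} ∫_{[0,2π]^n} exp( Σ_{x≠y} a_{x,y} e^{i(θ_x − θ_y)} ) ∏_{x∈X} dθ_x = Σ_{k Eulerian network on X} ∏_{x≠y} a_{x,y}^{k_{x,y}} / k_{x,y}! , where both sides converge absolutely. -/
open scoped BigOperators

/-- A network on a finite set `X` is a matrix `k : X → X → ℕ` with zero diagonal.
It is *Eulerian* if at every vertex the outgoing and incoming numbers agree. -/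
def IsEulerianNetwork {X : Type*} [Fintype X] (k : X → X → ℕ) : Prop :=
  (∀ x, k x x = 0) ∧ ∀ x, (∑ y, k x y) = ∑ y, k y x

/-!
Expanding the exponential of the finite sum into a product of exponential series writes the
integrand, for each `θ`, as an absolutely convergent sum over all networks `k` of
`networkWeight a k * ∏ₓ exp (i dₖ(x) θₓ)`, where `dₖ(x)` is the net outflow of `k` at `x`.
The terms are bounded by the summable `‖networkWeight a k‖`, so the series can be integrated
termwise. The torus integral of `∏ₓ exp (i dₖ(x) θₓ)` is `(2π)ⁿ` if `dₖ ≡ 0` and `0` otherwise,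
and since `a` vanishes on the diagonal, so does the weight of every network with a loop.
-/

open Filter Topology Complex MeasureTheory Set

section PiProd

variable {ι κ : Type*} [Fintype ι]

theorem summable_pi_prod_of_nonneg {g : ι → κ → ℝ} (hg₀ : ∀ i m, 0 ≤ g i m)
    (hg : ∀ i, Summable (g i)) : Summable fun k : ι → κ => ∏ i, g i (k i) := by
  classical
  refine summable_of_sum_le (c := ∏ i, ∑' m, g i m)
    (fun k => Finset.prod_nonneg fun i _ => hg₀ i _) fun u => ?_
  calc ∑ k ∈ u, ∏ i, g i (k i)
      ≤ ∑ k ∈ Fintype.piFinset fun i => u.image (· i), ∏ i, g i (k i) :=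
        Finset.sum_le_sum_of_subset_of_nonneg
          (fun k hk => Fintype.mem_piFinset.2 fun i => Finset.mem_image_of_mem _ hk)
          fun k _ _ => Finset.prod_nonneg fun i _ => hg₀ i _
    _ = ∏ i, ∑ m ∈ u.image (· i), g i m := (Finset.prod_univ_sum _ _).symm
    _ ≤ ∏ i, ∑' m, g i m :=
        Finset.prod_le_prod (fun i _ => Finset.sum_nonneg fun m _ => hg₀ i m)
          fun i _ => (hg i).sum_le_tsum _ fun m _ => hg₀ i m

variable {R : Type*} [NormedCommRing R] [NormOneClass R] {f : ι → κ → R}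

theorem summable_norm_pi_prod (hf : ∀ i, Summable fun m => ‖f i m‖) :
    Summable fun k : ι → κ => ‖∏ i, f i (k i)‖ :=
  (summable_pi_prod_of_nonneg (fun _ _ => norm_nonneg _) hf).of_nonneg_of_le
    (fun _ => norm_nonneg _) fun _ => Finset.norm_prod_le _ _

theorem hasSum_pi_prod_of_summable_norm [CompleteSpace R]
    (hf : ∀ i, Summable fun m => ‖f i m‖) :
    HasSum (fun k : ι → κ => ∏ i, f i (k i)) (∏ i, ∑' m, f i m) := by
  classical
  have hsum := (summable_norm_pi_prod hf).of_norm
  have hbox : Tendsto (fun t : Finset κ => Fintype.piFinset fun _ : ι => t) atTop atTop :=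
    tendsto_atTop_atTop.2 fun u => ⟨u.biUnion fun k => Finset.univ.image k, fun t ht k hk =>
      Fintype.mem_piFinset.2 fun i => ht (Finset.mem_biUnion.2 ⟨k, hk, by simp⟩)⟩
  have hlim : Tendsto (fun t : Finset κ => ∏ i, ∑ m ∈ t, f i m) atTop (𝓝 (∏ i, ∑' m, f i m)) :=
    tendsto_finsetProd _ fun i _ => (hf i).of_norm.hasSum
  have hbox_lim : Tendsto (fun t : Finset κ => ∏ i, ∑ m ∈ t, f i m) atTop
      (𝓝 (∑' k : ι → κ, ∏ i, f i (k i))) := by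
    simpa only [Function.comp_def, Finset.prod_univ_sum] using
      (hsum.hasSum : Tendsto _ atTop _).comp hbox
  rw [tendsto_nhds_unique hlim hbox_lim]
  exact hsum.hasSum

end PiProd

theorem Complex.summable_norm_pow_div_factorial (z : ℂ) :
    Summable fun m => ‖z ^ m / (m.factorial : ℂ)‖ := by
  simpa only [norm_div, norm_pow, Complex.norm_natCast] using
    Real.summable_pow_div_factorial ‖z‖

theorem Complex.summable_norm_prod_pow_div_factorial {κ : Type*} [Fintype κ] (w : κ → ℂ) :
    Summable fun r : κ → ℕ => ‖∏ j, w j ^ r j / ((r j).factorial : ℂ)‖ :=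
  summable_norm_pi_prod (f := fun j (m : ℕ) => w j ^ m / (m.factorial : ℂ))
    fun j => Complex.summable_norm_pow_div_factorial (w j)

theorem Complex.hasSum_prod_pow_div_factorial {κ : Type*} [Fintype κ] (w : κ → ℂ) :
    HasSum (fun r : κ → ℕ => ∏ j, w j ^ r j / ((r j).factorial : ℂ))
      (exp (∑ j, w j)) := by
  have hexp : ∀ z : ℂ, ∑' m, z ^ m / (m.factorial : ℂ) = exp z := fun z => by
    rw [Complex.exp_eq_exp_ℂ]
    exact (NormedSpace.expSeries_div_hasSum_exp z).tsum_eq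
  rw [exp_sum, ← Finset.prod_congr rfl fun j _ => hexp (w j)]
  exact hasSum_pi_prod_of_summable_norm (f := fun j (m : ℕ) => w j ^ m / (m.factorial : ℂ))
    fun j => Complex.summable_norm_pow_div_factorial (w j)

theorem integral_Icc_exp_I_mul_int (m : ℤ) :
    ∫ t in Icc (0 : ℝ) (2 * Real.pi), exp (I * m * t)
      = if m = 0 then ((2 * Real.pi : ℝ) : ℂ) else 0 := by
  rw [integral_Icc_eq_integral_Ioc, ← intervalIntegral.integral_of_le (by positivity)]
  split_ifs with hm
  · simp [hm]
  · have hperiod : exp (I * m * ((2 * Real.pi : ℝ) : ℂ)) = 1 := by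
      rw [← exp_int_mul_two_pi_mul_I m]
      push_cast
      ring_nf
    rw [integral_exp_mul_complex (mul_ne_zero I_ne_zero (Int.cast_ne_zero.2 hm)), hperiod]
    simp

theorem setIntegral_univ_pi_prod {ι : Type*} [Fintype ι] {E : ι → Type*}
    [∀ i, MeasurableSpace (E i)] {μ : ∀ i, Measure (E i)} [∀ i, SigmaFinite (μ i)]
    {𝕜 : Type*} [RCLike 𝕜] (s : ∀ i, Set (E i)) (f : ∀ i, E i → 𝕜) :
    ∫ x in univ.pi s, ∏ i, f i (x i) ∂Measure.pi μ = ∏ i, ∫ x in s i, f i x ∂μ i := by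
  rw [Measure.restrict_pi_pi, integral_fintype_prod_eq_prod]

section Network

variable {X : Type*} [Fintype X]

noncomputable def networkWeight (w : X → X → ℂ) (k : X → X → ℕ) : ℂ :=
  ∏ x, ∏ y, w x y ^ k x y / ((k x y).factorial : ℂ)

def netOutflow (k : X → X → ℕ) (x : X) : ℤ :=
  ∑ y, (k x y : ℤ) - ∑ y, (k y x : ℤ)

theorem netOutflow_eq_zero_iff {k : X → X → ℕ} {x : X} :
    netOutflow k x = 0 ↔ ∑ y, k x y = ∑ y, k y x := by
  rw [netOutflow, sub_eq_zero]
  exact_mod_cast Iff.rfl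

theorem sum_sum_natCast_mul_sub {R : Type*} [CommRing R] (k : X → X → ℕ) (θ : X → R) :
    ∑ x, ∑ y, (k x y : R) * (θ x - θ y) = ∑ x, (netOutflow k x : R) * θ x := by
  simp only [netOutflow, mul_sub, Finset.sum_sub_distrib, Int.cast_sub, Int.cast_sum,
    Int.cast_natCast, sub_mul, Finset.sum_mul]
  rw [Finset.sum_comm (f := fun x y => (k x y : R) * θ y)]

theorem summable_norm_networkWeight (w : X → X → ℂ) :
    Summable fun k => ‖networkWeight w k‖ :=
  summable_norm_pi_prod (f := fun x (r : X → ℕ) => ∏ y, w x y ^ r y / ((r y).factorial : ℂ))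
    fun x => Complex.summable_norm_prod_pow_div_factorial (w x)

theorem hasSum_networkWeight (w : X → X → ℂ) :
    HasSum (networkWeight w) (exp (∑ x, ∑ y, w x y)) := by
  rw [exp_sum, ← Finset.prod_congr rfl fun x _ =>
    (Complex.hasSum_prod_pow_div_factorial (w x)).tsum_eq]
  exact hasSum_pi_prod_of_summable_norm
    (f := fun x (r : X → ℕ) => ∏ y, w x y ^ r y / ((r y).factorial : ℂ))
    fun x => Complex.summable_norm_prod_pow_div_factorial (w x)

theorem networkWeight_eq_zero_of_apply_self_ne_zero {a : X → X → ℂ} (hdiag : ∀ x, a x x = 0)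
    {k : X → X → ℕ} {x : X} (hx : k x x ≠ 0) : networkWeight a k = 0 :=
  Finset.prod_eq_zero (Finset.mem_univ x) <| Finset.prod_eq_zero (Finset.mem_univ x) <| by
    rw [hdiag, zero_pow hx, zero_div]

theorem networkWeight_mul_exp_phase (a : X → X → ℂ) (k : X → X → ℕ) (θ : X → ℝ) :
    networkWeight (fun x y => a x y * exp (I * ((θ x : ℂ) - θ y))) k
      = networkWeight a k * ∏ x, exp (I * netOutflow k x * θ x) := by
  have hphase : ∏ x, ∏ y, exp (I * ((θ x : ℂ) - θ y)) ^ k x y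
      = ∏ x, exp (I * netOutflow k x * θ x) := by
    simp only [← exp_nat_mul, ← exp_sum, mul_left_comm _ I, ← Finset.mul_sum,
      sum_sum_natCast_mul_sub, mul_assoc]
  rw [networkWeight, networkWeight, ← hphase, ← Finset.prod_mul_distrib]
  refine Finset.prod_congr rfl fun x _ => ?_
  rw [← Finset.prod_mul_distrib]
  refine Finset.prod_congr rfl fun y _ => ?_
  ring

theorem setIntegral_networkWeight_mul_exp_phase (a : X → X → ℂ) (k : X → X → ℕ) :
    ∫ θ : X → ℝ in univ.pi fun _ => Icc 0 (2 * Real.pi),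
        networkWeight (fun x y => a x y * exp (I * ((θ x : ℂ) - θ y))) k
      = ((2 * Real.pi) ^ Fintype.card X : ℝ) •
          if ∀ x, netOutflow k x = 0 then networkWeight a k else 0 := by
  simp_rw [networkWeight_mul_exp_phase, integral_const_mul]
  rw [volume_pi, setIntegral_univ_pi_prod _ fun x (t : ℝ) => exp (I * netOutflow k x * t)]
  simp_rw [integral_Icc_exp_I_mul_int, Fintype.prod_ite_zero]
  split_ifs <;> simp [Complex.real_smul, mul_comm]

theorem norm_networkWeight_mul_exp_phase (a : X → X → ℂ) (k : X → X → ℕ) (θ : X → ℝ) :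
    ‖networkWeight (fun x y => a x y * exp (I * ((θ x : ℂ) - θ y))) k‖ = ‖networkWeight a k‖ := by
  rw [networkWeight_mul_exp_phase, norm_mul, norm_prod]
  simp [Complex.norm_exp]

theorem continuous_networkWeight_mul_exp_phase (a : X → X → ℂ) (k : X → X → ℕ) :
    Continuous fun θ : X → ℝ =>
      networkWeight (fun x y => a x y * exp (I * ((θ x : ℂ) - θ y))) k := by
  unfold networkWeight
  fun_prop

theorem indicator_isEulerianNetwork_networkWeight {a : X → X → ℂ} (hdiag : ∀ x, a x x = 0)
    (k : X → X → ℕ) :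
    {k | IsEulerianNetwork k}.indicator (networkWeight a) k
      = if ∀ x, netOutflow k x = 0 then networkWeight a k else 0 := by
  by_cases hk : IsEulerianNetwork k
  · simp [hk, netOutflow_eq_zero_iff, hk.2]
  · rw [indicator_of_notMem (show k ∉ {k | IsEulerianNetwork k} from hk)]
    split_ifs with hflow
    · obtain ⟨x, hx⟩ : ∃ x, k x x ≠ 0 := by
        by_contra! h
        exact hk ⟨h, fun x => netOutflow_eq_zero_iff.1 (hflow x)⟩
      exact (networkWeight_eq_zero_of_apply_self_ne_zero hdiag hx).symm
    · rfl

end Network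

theorem torus_integral_eq_sum_eulerian_general
    {X : Type*} [Fintype X]
    (a : Matrix X X ℂ) (hdiag : ∀ x, a x x = 0) :
    HasSum
      (fun k : {k : X → X → ℕ // IsEulerianNetwork k} =>
        ∏ x, ∏ y, a x y ^ k.1 x y / (Nat.factorial (k.1 x y) : ℂ))
      (((2 * Real.pi) ^ (Fintype.card X))⁻¹ •
        ∫ θ : X → ℝ in Set.univ.pi (fun _ : X => Set.Icc (0:ℝ) (2 * Real.pi)),
          Complex.exp (∑ x, ∑ y, a x y *
            Complex.exp (Complex.I * ((θ x : ℂ) - (θ y : ℂ))))) := by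
  -- `Matrix` is not reducible to a function type, so `simp` could not rewrite under `a x y`.
  obtain ⟨a, rfl⟩ : ∃ b : X → X → ℂ, b = a := ⟨a, rfl⟩
  let F : (X → X → ℕ) → (X → ℝ) → ℂ := fun k θ =>
    networkWeight (fun x y => a x y * exp (I * ((θ x : ℂ) - θ y))) k
  have hF_int : ∀ k, IntegrableOn (F k) (univ.pi fun _ => Icc 0 (2 * Real.pi)) := fun k =>
    (continuous_networkWeight_mul_exp_phase a k).continuousOn.integrableOn_compact
      (isCompact_univ_pi fun _ => isCompact_Icc)
  have hF_norm : Summable fun k => ∫ θ in univ.pi fun _ => Icc 0 (2 * Real.pi), ‖F k θ‖ := by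
    simp_rw [F, norm_networkWeight_mul_exp_phase, setIntegral_const]
    exact (summable_norm_networkWeight a).const_smul _
  have hsum := hasSum_integral_of_summable_integral_norm hF_int hF_norm
  simp_rw [F, fun w => (hasSum_networkWeight w).tsum_eq, setIntegral_networkWeight_mul_exp_phase,
    ← indicator_isEulerianNetwork_networkWeight hdiag] at hsum
  have hvol : ((2 * Real.pi) ^ Fintype.card X : ℝ) ≠ 0 := by positivity
  have hscaled := hsum.const_smul ((2 * Real.pi) ^ Fintype.card X : ℝ)⁻¹
  simp_rw [inv_smul_smul₀ hvol] at hscaled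
  exact hasSum_subtype_iff_indicator.2 hscaled

/-- For any complex matrix `a` with zero diagonal,
`(2π)^{-n} ∫_{[0,2π]^n} exp(Σ_{x,y} a_{x,y} e^{i(θ_x-θ_y)}) dθ
  = Σ_{k Eulerian} ∏_{x,y} a_{x,y}^{k_{x,y}}/k_{x,y}!`,
the sum converging (unconditionally, hence absolutely). -/
theorem torus_integral_eq_sum_eulerian
    {X : Type*} [Fintype X] [DecidableEq X]
    (a : Matrix X X ℂ) (hdiag : ∀ x, a x x = 0) :
    HasSum
      (fun k : {k : X → X → ℕ // IsEulerianNetwork k} =>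
        ∏ x, ∏ y, a x y ^ k.1 x y / (Nat.factorial (k.1 x y) : ℂ))
      (((2 * Real.pi) ^ (Fintype.card X))⁻¹ •
        ∫ θ : X → ℝ in Set.univ.pi (fun _ : X => Set.Icc (0:ℝ) (2 * Real.pi)),
          Complex.exp (∑ x, ∑ y, a x y *
            Complex.exp (Complex.I * ((θ x : ℂ) - (θ y : ℂ))))) :=
  torus_integral_eq_sum_eulerian_general a hdiag
end

section
/- Let X be a finite set, M a finite group, and U : X × X → M a map with U_{y,x} = U_{x,y}^{-1} for all x,y (an M-assignment). Let P : X × X → ℝ be a matrix with nonnegative entries and spectral radius strictly less than 1, and define the lifted matrix P̃ indexed by X × M by P̃_{(x,m),(y,n)} = P_{x,y} if n = m·U_{x,y} and 0 otherwise. Then I − P and I − P̃ are invertible, and for every x, y ∈ X and every m₀ ∈ M: Σ_{m∈M} (I − P̃)^{-1}_{(x,m₀),(y,m)} = (I − P)^{-1}_{x,y}. -/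
/-!
Let `J` be the matrix of the covering projection `X × M → X`. Each row of `P̃` is the
corresponding row of `P` spread over a fibre, so `P̃ J = J P` and hence `P̃ ^ k J = J P ^ k`.
For nonnegative matrices the `ℓ∞`-operator norm is the largest row sum, so
`‖P̃ ^ k‖ ≤ ‖P ^ k‖`, and by Gelfand's formula `‖P ^ k‖ < 1` for some `k`. Hence `I - P`
and `I - P̃` are invertible, and `(I - P̃)⁻¹ J = J (I - P)⁻¹`, whose `((x, m₀), y)` entry
is the fibre sum.
-/

open scoped NNReal

theorem isUnit_one_sub_of_isUnit_one_sub_pow {A : Type*} [Ring A] {a : A} {k : ℕ}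
    (h : IsUnit (1 - a ^ k)) : IsUnit (1 - a) := by
  have hcomm : Commute (1 - a) (∑ i ∈ Finset.range k, a ^ i) :=
    (Commute.one_left _).sub_left (Commute.sum_right _ _ _ fun i _ => Commute.self_pow a i)
  rw [← mul_neg_geom_sum] at h
  exact (hcomm.isUnit_mul_iff.mp h).1

theorem isUnit_one_sub_of_nnnorm_pow_lt_one {A : Type*} [NormedRing A] [CompleteSpace A]
    {a : A} {k : ℕ} (h : ‖a ^ k‖₊ < 1) : IsUnit (1 - a) :=
  isUnit_one_sub_of_isUnit_one_sub_pow (isUnit_one_sub_of_norm_lt_one h)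

theorem exists_nnnorm_pow_lt_one_of_forall_spectrum_norm_lt_one {A : Type*} [NormedRing A]
    [NormedAlgebra ℂ A] [CompleteSpace A] {a : A} (h : ∀ z ∈ spectrum ℂ a, ‖z‖ < 1) :
    ∃ k, ‖a ^ k‖₊ < 1 := by
  have hrad : spectralRadius ℂ a < (1 : ℝ≥0) := by
    rcases subsingleton_or_nontrivial A with hA | hA
    · simp [spectralRadius, spectrum.of_subsingleton]
    · exact spectrum.spectralRadius_lt_of_forall_lt a fun z hz => h z hz
  obtain ⟨k, hk, hk_pos⟩ :=
    ((spectrum.pow_nnnorm_pow_one_div_tendsto_nhds_spectralRadius a).eventually_lt_const hrad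
      |>.and (Filter.eventually_gt_atTop 0)).exists
  refine ⟨k, not_le.mp fun hge => hk.not_ge ?_⟩
  exact ENNReal.one_le_rpow (by exact_mod_cast hge) (by positivity)

namespace Matrix

variable {X M R : Type*}

/-- The lift `P̃` of `P` to the covering `X × M` defined by the assignment `U`. -/
def coveringLift [Mul M] [DecidableEq M] [Zero R] (U : X → X → M) (P : Matrix X X R) :
    Matrix (X × M) (X × M) R :=
  of fun p q => if q.2 = p.2 * U p.1 q.1 then P p.1 q.1 else 0

variable (X M R) in
def coveringProj [DecidableEq X] [Zero R] [One R] : Matrix (X × M) X R :=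
  of fun p y => if p.1 = y then 1 else 0

theorem mul_coveringProj_apply [DecidableEq X] [Fintype X] [Fintype M] [Semiring R] {m : Type*}
    (A : Matrix m (X × M) R) (i : m) (y : X) :
    (A * coveringProj X M R) i y = ∑ n, A i (y, n) := by
  simp [mul_apply, coveringProj, Fintype.sum_prod_type, Finset.sum_comm (γ := X)]

theorem coveringProj_mul_apply [DecidableEq X] [Fintype X] [Semiring R] {n : Type*}
    (B : Matrix X n R) (p : X × M) (j : n) :
    (coveringProj X M R * B) p j = B p.1 j := by
  simp [mul_apply, coveringProj]

theorem coveringLift_mul_coveringProj [DecidableEq X] [Fintype X] [Fintype M] [Mul M]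
    [DecidableEq M] [Semiring R] (U : X → X → M) (P : Matrix X X R) :
    coveringLift U P * coveringProj X M R = coveringProj X M R * P := by
  ext p y
  simp [mul_coveringProj_apply, coveringProj_mul_apply, coveringLift]

theorem coveringLift_nonneg [Mul M] [DecidableEq M] {U : X → X → M} {P : Matrix X X ℝ}
    (hP : ∀ x y, 0 ≤ P x y) (p q : X × M) : 0 ≤ coveringLift U P p q := by
  rw [coveringLift, of_apply]
  split_ifs
  exacts [hP _ _, le_rfl]

theorem pow_mul_eq_mul_pow_of_mul_eq_mul {m n : Type*} [Fintype m] [DecidableEq m] [Fintype n]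
    [DecidableEq n] [Semiring R] {A : Matrix m m R} {B : Matrix n n R} {J : Matrix m n R}
    (h : A * J = J * B) (k : ℕ) : A ^ k * J = J * B ^ k := by
  induction k with
  | zero => simp
  | succ k ih => rw [pow_succ, pow_succ, Matrix.mul_assoc, h, ← Matrix.mul_assoc, ih,
      Matrix.mul_assoc]

theorem inv_mul_eq_mul_inv_of_mul_eq_mul {m n : Type*} [Fintype m] [DecidableEq m] [Fintype n]
    [DecidableEq n] [CommRing R] {A : Matrix m m R} {B : Matrix n n R} {J : Matrix m n R}
    (h : A * J = J * B) (hA : IsUnit A.det) (hB : IsUnit B.det) : A⁻¹ * J = J * B⁻¹ :=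
  calc A⁻¹ * J = A⁻¹ * (J * B * B⁻¹) := by rw [mul_nonsing_inv_cancel_right _ _ hB]
    _ = A⁻¹ * (A * (J * B⁻¹)) := by rw [← h, Matrix.mul_assoc]
    _ = J * B⁻¹ := nonsing_inv_mul_cancel_left _ _ hA

theorem sum_inv_one_sub_coveringLift_apply [Fintype X] [DecidableEq X] [Fintype M] [Mul M]
    [DecidableEq M] [CommRing R] (U : X → X → M) {P : Matrix X X R} (hP : IsUnit (1 - P))
    (hlift : IsUnit (1 - coveringLift U P)) (x y : X) (m₀ : M) :
    ∑ m, (1 - coveringLift U P)⁻¹ (x, m₀) (y, m) = (1 - P)⁻¹ x y := by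
  have hsub : (1 - coveringLift U P) * coveringProj X M R = coveringProj X M R * (1 - P) := by
    rw [Matrix.sub_mul, Matrix.mul_sub, Matrix.one_mul, Matrix.mul_one,
      coveringLift_mul_coveringProj]
  have hinv := inv_mul_eq_mul_inv_of_mul_eq_mul hsub
    ((isUnit_iff_isUnit_det _).mp hlift) ((isUnit_iff_isUnit_det _).mp hP)
  simpa [mul_coveringProj_apply, coveringProj_mul_apply] using congr_fun₂ hinv (x, m₀) y

section LinftyOpNorm

attribute [local instance] Matrix.linftyOpNormedRing Matrix.linftyOpNormedAlgebra

variable [Fintype X] [DecidableEq X]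

theorem exists_nnnorm_pow_lt_one_of_forall_spectrum_map_ofReal {P : Matrix X X ℝ}
    (h : ∀ μ ∈ spectrum ℂ (P.map Complex.ofReal), ‖μ‖ < 1) :
    ∃ k, ‖P ^ k‖₊ < 1 := by
  have : CompleteSpace (Matrix X X ℂ) := FiniteDimensional.complete ℂ _
  obtain ⟨k, hk⟩ := exists_nnnorm_pow_lt_one_of_forall_spectrum_norm_lt_one h
  refine ⟨k, ?_⟩
  have hmap : (P ^ k).map Complex.ofReal = P.map Complex.ofReal ^ k :=
    P.map_pow Complex.ofRealHom k
  rw [← hmap, linfty_opNNNorm_def] at hk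
  rw [linfty_opNNNorm_def]
  simpa using hk

theorem linfty_opNNNorm_le_of_mul_coveringProj [Fintype M] [DecidableEq M]
    {A : Matrix (X × M) (X × M) ℝ} {B : Matrix X X ℝ}
    (hA : ∀ p q, 0 ≤ A p q) (hB : ∀ x y, 0 ≤ B x y)
    (h : A * coveringProj X M ℝ = coveringProj X M ℝ * B) : ‖A‖₊ ≤ ‖B‖₊ := by
  rw [linfty_opNNNorm_def, linfty_opNNNorm_def]
  refine Finset.sup_le fun p _ => ?_
  have hrow : ∑ q, ‖A p q‖₊ = ∑ y, ‖B p.1 y‖₊ := NNReal.eq <| by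
    simp only [NNReal.coe_sum, coe_nnnorm, Real.norm_of_nonneg (hA _ _),
      Real.norm_of_nonneg (hB _ _)]
    rw [Fintype.sum_prod_type]
    simp only [← mul_coveringProj_apply, h, coveringProj_mul_apply]
  rw [hrow]
  exact Finset.le_sup (f := fun x => ∑ y, ‖B x y‖₊) (Finset.mem_univ p.1)

theorem isUnit_one_sub_and_isUnit_one_sub_coveringLift [Fintype M] [Mul M] [DecidableEq M]
    (U : X → X → M) {P : Matrix X X ℝ} (hP : ∀ x y, 0 ≤ P x y)
    (hspec : ∀ μ ∈ spectrum ℂ (P.map Complex.ofReal), ‖μ‖ < 1) :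
    IsUnit (1 - P) ∧ IsUnit (1 - coveringLift U P) := by
  have : CompleteSpace (Matrix X X ℝ) := FiniteDimensional.complete ℝ _
  have : CompleteSpace (Matrix (X × M) (X × M) ℝ) := FiniteDimensional.complete ℝ _
  obtain ⟨k, hk⟩ := exists_nnnorm_pow_lt_one_of_forall_spectrum_map_ofReal hspec
  have hlift : ‖coveringLift U P ^ k‖₊ ≤ ‖P ^ k‖₊ :=
    linfty_opNNNorm_le_of_mul_coveringProj (pow_apply_nonneg (coveringLift_nonneg hP) k)
      (pow_apply_nonneg hP k)
      (pow_mul_eq_mul_pow_of_mul_eq_mul (coveringLift_mul_coveringProj U P) k)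
  exact ⟨isUnit_one_sub_of_nnnorm_pow_lt_one hk,
    isUnit_one_sub_of_nnnorm_pow_lt_one (hlift.trans_lt hk)⟩

end LinftyOpNorm

end Matrix

theorem covering_green_function_fiber_sum_general
    {X : Type*} [Fintype X] [DecidableEq X]
    {M : Type*} [Group M] [Fintype M] [DecidableEq M]
    (U : X → X → M)
    (P : Matrix X X ℝ) (hnn : ∀ x y, 0 ≤ P x y)
    (hspec : ∀ μ ∈ spectrum ℂ (P.map Complex.ofReal), ‖μ‖ < 1) :
    IsUnit (1 - P) ∧
    IsUnit (1 - Matrix.of (fun p q : X × M =>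
        if q.2 = p.2 * U p.1 q.1 then P p.1 q.1 else 0)) ∧
    ∀ (x y : X) (m₀ : M),
      (∑ m : M, (1 - Matrix.of (fun p q : X × M =>
          if q.2 = p.2 * U p.1 q.1 then P p.1 q.1 else 0))⁻¹ (x, m₀) (y, m))
        = (1 - P)⁻¹ x y := by
  obtain ⟨hP, hlift⟩ := Matrix.isUnit_one_sub_and_isUnit_one_sub_coveringLift U hnn hspec
  exact ⟨hP, hlift, Matrix.sum_inv_one_sub_coveringLift_apply U hP hlift⟩

/-- Summing the Green function of a Galois covering (defined by an `M`-assignment `U`)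
over a fiber gives the Green function of the base graph:
`Σ_m (I - P̃)⁻¹_{(x,m₀),(y,m)} = (I - P)⁻¹_{x,y}`. -/
theorem covering_green_function_fiber_sum
    {X : Type*} [Fintype X] [DecidableEq X]
    {M : Type*} [Group M] [Fintype M] [DecidableEq M]
    (U : X → X → M) (hU : ∀ x y, U y x = (U x y)⁻¹)
    (P : Matrix X X ℝ) (hnn : ∀ x y, 0 ≤ P x y)
    (hspec : ∀ μ ∈ spectrum ℂ (P.map Complex.ofReal), ‖μ‖ < 1) :
    IsUnit (1 - P) ∧
    IsUnit (1 - Matrix.of (fun p q : X × M =>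
        if q.2 = p.2 * U p.1 q.1 then P p.1 q.1 else 0)) ∧
    ∀ (x y : X) (m₀ : M),
      (∑ m : M, (1 - Matrix.of (fun p q : X × M =>
          if q.2 = p.2 * U p.1 q.1 then P p.1 q.1 else 0))⁻¹ (x, m₀) (y, m))
        = (1 - P)⁻¹ x y :=
  covering_green_function_fiber_sum_general U P hnn hspec
end

section
/- Let X be a finite set, M a finite abelian group, and U : X × X → M a map with U_{y,x} = −U_{x,y} (an M-assignment, written additively). Let P : X × X → ℝ be a matrix with nonnegative entries and spectral radius strictly less than 1, and define the lifted matrix P̃ indexed by X × M by P̃_{(x,m),(y,n)} = P_{x,y} if n = m + U_{x,y} and 0 otherwise. For each character χ : M → ℂ (a homomorphism into the unit circle), define P^{U,χ}_{x,y} = P_{x,y} χ(U_{x,y}). Then I − P̃ and each I − P^{U,χ} are invertible, and for all x, y ∈ X and m, n ∈ M: (I − P̃)^{-1}_{(x,m),(y,n)} = (1/|M|) Σ_{χ ∈ \hat{M}} \overline{χ(n − m)} · (I − P^{U,χ})^{-1}_{x,y}, where the sum is over all characters of M. -/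
/-!
The characters of `M` split the lifted chain into `|M|` twisted copies of `P`: a matrix of the
form `B ⊗ₖ circulant χ`, with entries `B x y * χ (m - n)`, is mapped by `P̃ = coveringLift U P` to
`(P^{U,χ} * B) ⊗ₖ circulant χ`, where `P^{U,χ} = charTwist U χ P`. Since `|P^{U,χ}| ≤ P`
entrywise, Gelfand's formula bounds the spectral radius of `P^{U,χ}` by that of `P`, so
`I - P^{U,χ}` is invertible. Taking `B = (I - P^{U,χ})⁻¹` and averaging over `χ` with the
orthogonality relation `∑ χ, χ a = |M| * [a = 0]` gives a right inverse of `I - P̃` over `ℂ`;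
as `P̃` is real, it is the complexification of the real inverse.
-/

open scoped Kronecker

namespace Matrix

theorem sub_kronecker {l m n p α : Type*} [NonUnitalNonAssocRing α] (A₁ A₂ : Matrix l m α)
    (B : Matrix n p α) : (A₁ - A₂) ⊗ₖ B = A₁ ⊗ₖ B - A₂ ⊗ₖ B := by
  ext ⟨i, k⟩ ⟨j, l⟩
  simp [sub_mul]

theorem kronecker_sum {l m n p ι α : Type*} [NonUnitalNonAssocSemiring α] (A : Matrix l m α)
    (s : Finset ι) (B : ι → Matrix n p α) : A ⊗ₖ (∑ i ∈ s, B i) = ∑ i ∈ s, A ⊗ₖ B i := by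
  ext ⟨i, k⟩ ⟨j, l⟩
  simp [sum_apply, Finset.mul_sum]

theorem isUnit_and_map_inv_eq_of_map_mul_eq_one {n K S : Type*} [Fintype n] [DecidableEq n]
    [Field K] [CommRing S] [Nontrivial S] (f : K →+* S) {A : Matrix n n K} {G : Matrix n n S}
    (h : A.map f * G = 1) : IsUnit A ∧ A⁻¹.map f = G := by
  have hA : IsUnit A := by
    rw [isUnit_iff_isUnit_det, isUnit_iff_ne_zero]
    intro hdet
    have hunit : IsUnit (f A.det) := f.map_det A ▸ isUnit_det_of_right_inverse h
    rw [hdet, map_zero] at hunit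
    exact not_isUnit_zero hunit
  refine ⟨hA, ?_⟩
  have hinv : A.map f * A⁻¹.map f = 1 := by
    rw [← f.mapMatrix_apply, ← f.mapMatrix_apply, ← map_mul, mul_nonsing_inv A
      ((isUnit_iff_isUnit_det A).mp hA), map_one]
  rw [← inv_eq_right_inv hinv, inv_eq_right_inv h]

section SpectralRadius

variable {n : Type*} [Fintype n] [DecidableEq n]

theorem norm_pow_apply_le_pow_apply {A : Matrix n n ℂ} {B : Matrix n n ℝ}
    (h : ∀ i j, ‖A i j‖ ≤ B i j) (k : ℕ) (i j : n) : ‖(A ^ k) i j‖ ≤ (B ^ k) i j := by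
  induction k generalizing j with
  | zero => by_cases hij : i = j <;> simp [hij]
  | succ k ih =>
    rw [pow_succ, pow_succ, mul_apply, mul_apply]
    refine (norm_sum_le _ _).trans (Finset.sum_le_sum fun l _ => ?_)
    rw [norm_mul]
    exact mul_le_mul (ih l) (h l j) (norm_nonneg _) ((norm_nonneg _).trans (ih l))

section LinftyOpNorm

attribute [local instance] Matrix.linftyOpNormedRing Matrix.linftyOpNormedAlgebra

theorem spectralRadius_le_of_norm_apply_le {A : Matrix n n ℂ} {B : Matrix n n ℝ}
    (h : ∀ i j, ‖A i j‖ ≤ B i j) :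
    spectralRadius ℂ A ≤ spectralRadius ℂ (B.map Complex.ofReal) := by
  have hpow (k : ℕ) : ‖A ^ k‖₊ ≤ ‖B.map Complex.ofReal ^ k‖₊ := by
    have hmap : B.map Complex.ofReal ^ k = (B ^ k).map Complex.ofReal :=
      (map_pow Complex.ofRealHom.mapMatrix B k).symm
    rw [hmap, linfty_opNNNorm_def, linfty_opNNNorm_def]
    refine Finset.sup_mono_fun fun i _ => Finset.sum_le_sum fun j _ => ?_
    rw [← NNReal.coe_le_coe, coe_nnnorm, coe_nnnorm, map_apply, Complex.norm_real]
    exact (norm_pow_apply_le_pow_apply h k i j).trans (Real.le_norm_self _)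
  exact le_of_tendsto_of_tendsto' (spectrum.pow_nnnorm_pow_one_div_tendsto_nhds_spectralRadius A)
    (spectrum.pow_nnnorm_pow_one_div_tendsto_nhds_spectralRadius _)
    fun k => ENNReal.rpow_le_rpow (by exact_mod_cast hpow k) (by positivity)

theorem spectralRadius_lt_one {A : Matrix n n ℂ} (h : ∀ μ ∈ spectrum ℂ A, ‖μ‖ < 1) :
    spectralRadius ℂ A < 1 := by
  rcases (spectrum ℂ A).eq_empty_or_nonempty with hempty | hne
  · simp [spectralRadius, hempty]
  · exact_mod_cast spectrum.spectralRadius_lt_of_forall_lt_of_nonempty hne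
      (r := 1) fun μ hμ => by exact_mod_cast h μ hμ

end LinftyOpNorm

theorem isUnit_one_sub_of_norm_apply_le {A : Matrix n n ℂ} {B : Matrix n n ℝ}
    (h : ∀ i j, ‖A i j‖ ≤ B i j) (hB : ∀ μ ∈ spectrum ℂ (B.map Complex.ofReal), ‖μ‖ < 1) :
    IsUnit (1 - A) := by
  have hA : spectralRadius ℂ A < ‖(1 : ℂ)‖₊ := by
    simpa using (spectralRadius_le_of_norm_apply_le h).trans_lt (spectralRadius_lt_one hB)
  simpa using spectrum.mem_resolventSet_iff.mp (spectrum.mem_resolventSet_of_spectralRadius_lt hA)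

end SpectralRadius

end Matrix

theorem AddChar.sum_circulant {M : Type*} [AddCommGroup M] [Fintype M] [DecidableEq M] :
    ∑ χ : AddChar M ℂ, Matrix.circulant ⇑χ = (Fintype.card M : ℂ) • 1 := by
  ext m n
  simp [Matrix.sum_apply, Matrix.circulant_apply, AddChar.sum_apply_eq_ite, Matrix.one_apply,
    sub_eq_zero]

section Covering

variable {X M : Type*} [AddCommGroup M] [DecidableEq M]

def coveringLift {R : Type*} [Zero R] (U : X → X → M) (P : Matrix X X R) :
    Matrix (X × M) (X × M) R :=
  Matrix.of fun p q => if q.2 = p.2 + U p.1 q.1 then P p.1 q.1 else 0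

def charTwist (U : X → X → M) (χ : AddChar M ℂ) (P : Matrix X X ℂ) : Matrix X X ℂ :=
  Matrix.of fun x y => P x y * χ (U x y)

theorem coveringLift_map {R S : Type*} [Zero R] [Zero S] (U : X → X → M) (P : Matrix X X R)
    (f : R → S) (hf : f 0 = 0) : (coveringLift U P).map f = coveringLift U (P.map f) := by
  ext p q
  simp [coveringLift, apply_ite f, hf]

variable [Fintype X] [Fintype M]

theorem coveringLift_mul_kronecker_circulant (U : X → X → M) (χ : AddChar M ℂ)
    (P B : Matrix X X ℂ) :
    coveringLift U P * (B ⊗ₖ Matrix.circulant χ)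
      = (charTwist U χ P * B) ⊗ₖ Matrix.circulant χ := by
  ext ⟨x, m⟩ ⟨y, n⟩
  have hχ (z : X) : χ (m + U x z - n) = χ (U x z) * χ (m - n) := by
    rw [← AddChar.map_add_eq_mul]; congr 1; abel
  simp only [coveringLift, Matrix.mul_apply, Matrix.of_apply, Matrix.kroneckerMap_apply,
    Matrix.circulant_apply, ite_mul, zero_mul, Fintype.sum_prod_type, Finset.sum_ite_eq',
    Finset.mem_univ, ↓reduceIte, hχ, charTwist, Finset.sum_mul]
  exact Finset.sum_congr rfl fun z _ => by ring

theorem one_sub_coveringLift_mul_fourier [DecidableEq X] (U : X → X → M) (P : Matrix X X ℂ)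
    (hP : ∀ χ : AddChar M ℂ, IsUnit (1 - charTwist U χ P)) :
    (1 - coveringLift U P) * ((Fintype.card M : ℂ)⁻¹ •
      ∑ χ : AddChar M ℂ, (1 - charTwist U χ P)⁻¹ ⊗ₖ Matrix.circulant χ) = 1 := by
  have hmode (χ : AddChar M ℂ) :
      (1 - coveringLift U P) * ((1 - charTwist U χ P)⁻¹ ⊗ₖ Matrix.circulant χ)
        = 1 ⊗ₖ Matrix.circulant χ := by
    rw [sub_mul, one_mul, coveringLift_mul_kronecker_circulant, ← Matrix.sub_kronecker,
      ← one_sub_mul, Matrix.mul_nonsing_inv _ ((Matrix.isUnit_iff_isUnit_det _).mp (hP χ))]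
  have hcard : (Fintype.card M : ℂ) ≠ 0 := Nat.cast_ne_zero.mpr Fintype.card_ne_zero
  rw [Matrix.mul_smul, Finset.mul_sum, Finset.sum_congr rfl fun χ _ => hmode χ,
    ← Matrix.kronecker_sum, AddChar.sum_circulant, Matrix.kronecker_smul, Matrix.one_kronecker_one,
    smul_smul, inv_mul_cancel₀ hcard, one_smul]

end Covering

theorem abelian_covering_green_function_fourier_general
    {X : Type*} [Fintype X] [DecidableEq X]
    {M : Type*} [AddCommGroup M] [Fintype M] [DecidableEq M]
    (U : X → X → M)
    (P : Matrix X X ℝ) (hnn : ∀ x y, 0 ≤ P x y)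
    (hspec : ∀ μ ∈ spectrum ℂ (P.map Complex.ofReal), ‖μ‖ < 1) :
    IsUnit (1 - Matrix.of (fun p q : X × M =>
        if q.2 = p.2 + U p.1 q.1 then P p.1 q.1 else 0)) ∧
    (∀ χ : AddChar M ℂ,
      IsUnit (1 - Matrix.of (fun x y : X => (P x y : ℂ) * χ (U x y)))) ∧
    ∀ (x y : X) (m n : M),
      (((1 - Matrix.of (fun p q : X × M =>
            if q.2 = p.2 + U p.1 q.1 then P p.1 q.1 else 0))⁻¹ (x, m) (y, n) : ℝ) : ℂ)
        = (Fintype.card M : ℂ)⁻¹ * ∑ χ : AddChar M ℂ,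
            (starRingEnd ℂ) (χ (n - m)) *
              (1 - Matrix.of (fun x y : X => (P x y : ℂ) * χ (U x y)))⁻¹ x y := by
  have htwist (χ : AddChar M ℂ) : IsUnit (1 - charTwist U χ (P.map Complex.ofReal)) :=
    Matrix.isUnit_one_sub_of_norm_apply_le
      (fun x y => by simp [charTwist, abs_of_nonneg (hnn x y)]) hspec
  have hmap : (1 - coveringLift U P).map Complex.ofReal
      = 1 - coveringLift U (P.map Complex.ofReal) := by
    rw [Matrix.map_sub _ Complex.ofReal_sub,
      Matrix.map_one _ Complex.ofReal_zero Complex.ofReal_one,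
      coveringLift_map _ _ _ Complex.ofReal_zero]
  obtain ⟨hunit, hinv⟩ := Matrix.isUnit_and_map_inv_eq_of_map_mul_eq_one Complex.ofRealHom
    (hmap ▸ one_sub_coveringLift_mul_fourier U (P.map Complex.ofReal) htwist)
  refine ⟨hunit, htwist, fun x y m n => ?_⟩
  refine (congrFun (congrFun hinv (x, m)) (y, n)).trans ?_
  simp only [Matrix.smul_apply, Matrix.sum_apply, Matrix.kroneckerMap_apply,
    Matrix.circulant_apply, smul_eq_mul]
  congr 1
  refine Finset.sum_congr rfl fun χ _ => ?_
  rw [← AddChar.map_neg_eq_conj, neg_sub, mul_comm]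
  rfl

/-- Fourier decomposition of the Green function of an abelian Galois covering:
`(I - P̃)⁻¹_{(x,m),(y,n)} = |M|⁻¹ Σ_χ χ(n-m)̄ (I - P^{U,χ})⁻¹_{x,y}`,
where the sum runs over the characters of the finite abelian group `M`. -/
theorem abelian_covering_green_function_fourier
    {X : Type*} [Fintype X] [DecidableEq X]
    {M : Type*} [AddCommGroup M] [Fintype M] [DecidableEq M]
    (U : X → X → M) (hU : ∀ x y, U y x = -(U x y))
    (P : Matrix X X ℝ) (hnn : ∀ x y, 0 ≤ P x y)
    (hspec : ∀ μ ∈ spectrum ℂ (P.map Complex.ofReal), ‖μ‖ < 1) :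
    IsUnit (1 - Matrix.of (fun p q : X × M =>
        if q.2 = p.2 + U p.1 q.1 then P p.1 q.1 else 0)) ∧
    (∀ χ : AddChar M ℂ,
      IsUnit (1 - Matrix.of (fun x y : X => (P x y : ℂ) * χ (U x y)))) ∧
    ∀ (x y : X) (m n : M),
      (((1 - Matrix.of (fun p q : X × M =>
            if q.2 = p.2 + U p.1 q.1 then P p.1 q.1 else 0))⁻¹ (x, m) (y, n) : ℝ) : ℂ)
        = (Fintype.card M : ℂ)⁻¹ * ∑ χ : AddChar M ℂ,
            (starRingEnd ℂ) (χ (n - m)) *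
              (1 - Matrix.of (fun x y : X => (P x y : ℂ) * χ (U x y)))⁻¹ x y :=
  abelian_covering_green_function_fourier_general U P hnn hspec
end

section
/- Let N ≥ 3 be an integer, κ > 0 and ω ∈ ℝ. Let P^{(ω)} be the N × N complex matrix indexed by ℤ/Nℤ with P^{(ω)}_{i,i+1} = e^{2πiω}/(2+κ) and P^{(ω)}_{i,i−1} = e^{−2πiω}/(2+κ) (indices mod N), all other entries 0. Set w_± = (1 ± √(1 − 4/(2+κ)²))/2. Then det(I − P^{(ω)}) = w_+^N + w_-^N − 2cos(2πNω)/(2+κ)^N. -/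
open Polynomial in
lemma aux_prod_root (N : ℕ) (hN : N ≠ 0) {ζ : ℂ} (hζ : IsPrimitiveRoot ζ N) (x y : ℂ) :
    ∏ k ∈ Finset.range N, (x - ζ ^ k * y) = x ^ N - y ^ N := by
  have hroots : (X ^ N - C (y ^ N) : ℂ[X]).roots = (Multiset.range N).map (ζ ^ · * y) := by
    rw [← Polynomial.nthRoots, hζ.nthRoots_eq rfl]
  have hmonic : (X ^ N - C (y ^ N) : ℂ[X]).Monic := monic_X_pow_sub_C _ hN
  have hcard : Multiset.card (X ^ N - C (y ^ N) : ℂ[X]).roots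
      = (X ^ N - C (y ^ N) : ℂ[X]).natDegree := by
    rw [hroots, Multiset.card_map, Multiset.card_range, natDegree_X_pow_sub_C]
  have hfact := prod_multiset_X_sub_C_of_monic_of_roots_card_eq hmonic hcard
  have := congrArg (Polynomial.eval x) hfact
  rw [Polynomial.eval_multiset_prod, hroots, Multiset.map_map] at this
  simp only [Function.comp, eval_sub, eval_X, eval_C, eval_pow] at this
  rw [← this, Finset.prod_eq_multiset_prod]
  simp [Finset.range]

lemma aux_pow_mod {ζ : ℂ} {N : ℕ} (h : ζ ^ N = 1) (m : ℕ) : ζ ^ (m % N) = ζ ^ m := by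
  conv_rhs => rw [← Nat.div_add_mod m N]
  rw [pow_add, pow_mul, h, one_pow, one_mul]

lemma aux_e_add {N : ℕ} [NeZero N] {ζ : ℂ} (hζ : ζ ^ N = 1) (j k : ZMod N) :
    ζ ^ (j + k).val = ζ ^ j.val * ζ ^ k.val := by
  rw [ZMod.val_add, aux_pow_mod hζ, pow_add]

lemma aux_e_mul {N : ℕ} [NeZero N] {ζ : ℂ} (hζ : ζ ^ N = 1) (j k : ZMod N) :
    ζ ^ (j * k).val = (ζ ^ j.val) ^ k.val := by
  rw [ZMod.val_mul, aux_pow_mod hζ, pow_mul]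

/-- Determinant of `I - P^{(ω)}` for the discrete circle with `N ≥ 3` vertices, unit
conductances, killing rate `κ > 0`, twisted by the harmonic one-form `ω`:
`det(I - P^{(ω)}) = w₊^N + w₋^N - 2cos(2πNω)/(2+κ)^N`
with `w_± = (1 ± √(1 - 4/(2+κ)²))/2`. -/
theorem circle_det_one_sub_P_twisted
    (N : ℕ) (hN : 3 ≤ N) [NeZero N] (κ : ℝ) (hκ : 0 < κ) (ω : ℝ) :
    (1 - Matrix.of (fun i j : ZMod N =>
        if j = i + 1 then Complex.exp (2 * Real.pi * Complex.I * ω) / (2 + κ)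
        else if j = i - 1 then Complex.exp (-(2 * Real.pi * Complex.I * ω)) / (2 + κ)
        else 0)).det
      = ((((1 + Real.sqrt (1 - 4 / (2 + κ) ^ 2)) / 2) ^ N
          + ((1 - Real.sqrt (1 - 4 / (2 + κ) ^ 2)) / 2) ^ N
          - 2 * Real.cos (2 * Real.pi * N * ω) / (2 + κ) ^ N : ℝ) : ℂ) := by
  have hN0 : (N : ℕ) ≠ 0 := by omega
  set a : ℂ := Complex.exp (2 * Real.pi * Complex.I * ω) / (2 + κ) with ha
  set b : ℂ := Complex.exp (-(2 * Real.pi * Complex.I * ω)) / (2 + κ) with hb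
  set ζ : ℂ := Complex.exp (2 * Real.pi * Complex.I / N) with hzeta
  have hζ : IsPrimitiveRoot ζ N := Complex.isPrimitiveRoot_exp N hN0
  have hζ1 : ζ ^ N = 1 := hζ.pow_eq_one
  set e : ZMod N → ℂ := fun k => ζ ^ k.val with he
  set M : Matrix (ZMod N) (ZMod N) ℂ := (1 - Matrix.of (fun i j : ZMod N =>
        if j = i + 1 then Complex.exp (2 * Real.pi * Complex.I * ω) / (2 + κ)
        else if j = i - 1 then Complex.exp (-(2 * Real.pi * Complex.I * ω)) / (2 + κ)
        else 0)) with hM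
  set W : Matrix (ZMod N) (ZMod N) ℂ := Matrix.of (fun i k => e (i * k)) with hW
  set lam : ZMod N → ℂ := fun k => 1 - a * e k - b * e (-k) with hlam
  -- basic facts
  have hek : ∀ k : ZMod N, e k * e (-k) = 1 := by
    intro k
    show ζ ^ k.val * ζ ^ (-k).val = 1
    rw [← aux_e_add hζ1 k (-k), add_neg_cancel, ZMod.val_zero, pow_zero]
  let σ : Fin N ≃ ZMod N :=
    { toFun := fun i => (i : ℕ)
      invFun := fun k => ⟨k.val, k.val_lt⟩
      left_inv := fun i => Fin.ext (ZMod.val_cast_of_lt i.isLt)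
      right_inv := fun k => ZMod.natCast_rightInverse k }
  have hreidx : ∀ f : ZMod N → ℂ, ∏ k : ZMod N, f k = ∏ j ∈ Finset.range N, f (j : ℕ) := by
    intro f
    rw [← Fin.prod_univ_eq_prod_range (fun j => f ((j : ℕ) : ZMod N)) N]
    exact (Fintype.prod_equiv σ (fun i => f (σ i)) f (fun i => rfl)).symm
  haveI : Fact (1 < N) := ⟨by omega⟩
  have h10 : (1 : ZMod N) ≠ 0 := one_ne_zero
  have h2ne : ∀ i : ZMod N, i + 1 ≠ i - 1 := by
    intro i h
    have h2 : ((2 : ℕ) : ZMod N) = 0 := by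
      push_cast
      linear_combination h
    rw [ZMod.natCast_eq_zero_iff] at h2
    have := Nat.le_of_dvd (by norm_num) h2
    omega
  have hMW : M * W = W * Matrix.diagonal lam := by
    ext i k
    rw [Matrix.mul_apply, Matrix.mul_diagonal]
    have hni1 : i ≠ i + 1 := by
      intro h
      exact h10 (by linear_combination -h)
    have hni2 : i ≠ i - 1 := by
      intro h
      exact h10 (by linear_combination h)
    have hsplit : ∀ j : ZMod N, M i j * W j k
        = (if j = i then e (i * k) else 0)
          + (-((if j = i + 1 then a * e ((i+1) * k) else 0)
              + (if j = i - 1 then b * e ((i-1) * k) else 0))) := by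
      intro j
      rw [hM]
      simp only [Matrix.sub_apply, Matrix.one_apply, Matrix.of_apply, hW, ← ha, ← hb]
      by_cases h1 : j = i
      · have e2 : j ≠ i + 1 := fun h => hni1 (h1.symm.trans h)
        have e3 : j ≠ i - 1 := fun h => hni2 (h1.symm.trans h)
        rw [if_pos h1.symm, if_pos h1, if_neg e2, if_neg e2, if_neg e3, if_neg e3, h1]
        ring
      · have e1 : ¬ i = j := fun h => h1 h.symm
        by_cases h2 : j = i + 1
        · have e3 : j ≠ i - 1 := fun h => h2ne i (h2.symm.trans h)
          rw [if_neg e1, if_neg h1, if_pos h2, if_pos h2, if_neg e3, h2]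
          ring
        · by_cases h3 : j = i - 1
          · rw [if_neg e1, if_neg h1, if_neg h2, if_neg h2, if_pos h3, if_pos h3, h3]
            ring
          · rw [if_neg e1, if_neg h1, if_neg h2, if_neg h2, if_neg h3, if_neg h3]
            ring
    rw [Finset.sum_congr rfl (fun j _ => hsplit j), Finset.sum_add_distrib]
    rw [Finset.sum_neg_distrib, Finset.sum_add_distrib]
    simp only [Finset.sum_ite_eq', Finset.mem_univ, if_true]
    have hik1 : e ((i + 1) * k) = e (i * k) * e k := by
      simp only [he]
      rw [add_mul, one_mul, aux_e_add hζ1]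
    have hik2 : e ((i - 1) * k) = e (i * k) * e (-k) := by
      simp only [he]
      rw [show (i - 1) * k = i * k + -k by ring, aux_e_add hζ1]
    rw [hik1, hik2, hlam]
    show _ = Matrix.of (fun i k : ZMod N => e (i * k)) i k * _
    simp only [Matrix.of_apply]
    ring
  have hWdet : W.det ≠ 0 := by
    have hre : W.det = (Matrix.vandermonde (fun i : Fin N => ζ ^ (i : ℕ))).det := by
      rw [← Matrix.det_submatrix_equiv_self σ W]
      congr 1
      ext i j
      simp only [Matrix.submatrix_apply, Matrix.vandermonde_apply, Matrix.of_apply]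
      show e (((i : ℕ) : ZMod N) * ((j : ℕ) : ZMod N)) = (ζ ^ (i : ℕ)) ^ (j : ℕ)
      rw [he]
      show ζ ^ ((((i : ℕ) : ZMod N) * ((j : ℕ) : ZMod N)).val) = _
      rw [aux_e_mul hζ1, ZMod.val_cast_of_lt i.isLt, ZMod.val_cast_of_lt j.isLt]
    rw [hre, Matrix.det_vandermonde]
    rw [Finset.prod_ne_zero_iff]
    intro i _
    rw [Finset.prod_ne_zero_iff]
    intro j hj
    rw [Finset.mem_Ioi] at hj
    refine sub_ne_zero_of_ne fun h => ?_
    exact Fin.ne_of_gt hj (Fin.ext (hζ.pow_inj j.isLt i.isLt h))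
  have hdet : M.det = ∏ k : ZMod N, lam k := by
    have h1 := congrArg Matrix.det hMW
    rw [Matrix.det_mul, Matrix.det_mul, Matrix.det_diagonal] at h1
    rw [mul_comm M.det W.det] at h1
    exact mul_left_cancel₀ hWdet h1
  have hprod : ∏ k : ZMod N, lam k
      = (((1 + Real.sqrt (1 - 4 / (2 + κ) ^ 2)) / 2 : ℝ) : ℂ) ^ N
        + (((1 - Real.sqrt (1 - 4 / (2 + κ) ^ 2)) / 2 : ℝ) : ℂ) ^ N
        - a ^ N - b ^ N := by
    set s : ℝ := Real.sqrt (1 - 4 / (2 + κ) ^ 2) with hs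
    have hk2 : (0:ℝ) < (2 + κ) ^ 2 := by positivity
    have hs0 : (0:ℝ) ≤ 1 - 4 / (2 + κ) ^ 2 := by
      rw [sub_nonneg, div_le_one hk2]
      nlinarith
    have hs2 : s ^ 2 = 1 - 4 / (2 + κ) ^ 2 := Real.sq_sqrt hs0
    have hk0 : ((2:ℂ) + κ) ≠ 0 := by
      have h' : ((2:ℝ) + κ) ≠ 0 := by linarith
      exact_mod_cast Complex.ofReal_ne_zero.mpr h'
    have ha0 : a ≠ 0 := by
      rw [ha]
      exact div_ne_zero (Complex.exp_ne_zero _) hk0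
    have hab : a * b = 1 / ((2:ℂ) + κ) ^ 2 := by
      rw [ha, hb, div_mul_div_comm, ← Complex.exp_add, add_neg_cancel, Complex.exp_zero, sq]
    set wp : ℂ := (1 + (s:ℂ)) / 2 with hwp
    set wm : ℂ := (1 - (s:ℂ)) / 2 with hwm
    have hs2c : ((s:ℂ)) ^ 2 = 1 - 4 / ((2:ℂ) + κ) ^ 2 := by
      have : ((s ^ 2 : ℝ) : ℂ) = ((1 - 4 / (2 + κ) ^ 2 : ℝ) : ℂ) := by exact_mod_cast congrArg Complex.ofReal hs2
      push_cast at this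
      exact this
    have hpm : wp * wm = a * b := by
      have e1 : wp * wm = (1 - (s:ℂ) ^ 2) / 4 := by rw [hwp, hwm]; ring
      rw [e1, hs2c, hab]
      field_simp
      ring
    have hsum : wp + wm = 1 := by rw [hwp, hwm]; ring
    have key : ∀ k : ZMod N, (a * e k) * lam k = -((wp - a * e k) * (wm - a * e k)) := by
      intro k
      have h1 := hek k
      rw [hlam]
      linear_combination (-(a * b)) * h1 + (-(a * e k)) * hsum + hpm
    have hP1 : ∀ x : ℂ, ∏ k : ZMod N, (x - a * e k) = x ^ N - a ^ N := by
      intro x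
      rw [hreidx (fun k => x - a * e k), ← aux_prod_root N hN0 hζ x a]
      refine Finset.prod_congr rfl fun j hj => ?_
      rw [Finset.mem_range] at hj
      simp only [he]
      rw [ZMod.val_cast_of_lt hj]
      ring
    have hPe : ((-1:ℂ)) ^ N * ∏ k : ZMod N, e k = -1 := by
      have h0 := aux_prod_root N hN0 hζ 0 1
      rw [zero_pow hN0, one_pow, zero_sub] at h0
      rw [hreidx e]
      have h1 : ∏ j ∈ Finset.range N, e ((j : ℕ) : ZMod N) = ∏ j ∈ Finset.range N, ζ ^ j := by
        refine Finset.prod_congr rfl fun j hj => ?_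
        rw [Finset.mem_range] at hj
        simp only [he]
        rw [ZMod.val_cast_of_lt hj]
      rw [h1]
      calc (-1:ℂ) ^ N * ∏ j ∈ Finset.range N, ζ ^ j
          = ∏ j ∈ Finset.range N, ((-1) * ζ ^ j) := by
            rw [Finset.prod_mul_distrib, Finset.prod_const, Finset.card_range]
        _ = ∏ j ∈ Finset.range N, (0 - ζ ^ j * 1) := Finset.prod_congr rfl fun _ _ => by ring
        _ = -1 := h0
    have hPa : ∏ k : ZMod N, (a * e k) = a ^ N * ∏ k : ZMod N, e k := by
      rw [Finset.prod_mul_distrib, Finset.prod_const, Finset.card_univ, ZMod.card]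
    have hmain : (∏ k : ZMod N, (a * e k)) * ∏ k : ZMod N, lam k
        = (-1:ℂ) ^ N * ((wp ^ N - a ^ N) * (wm ^ N - a ^ N)) := by
      rw [← Finset.prod_mul_distrib, Finset.prod_congr rfl (fun k _ => key k)]
      have hneg : ∀ k : ZMod N, -((wp - a * e k) * (wm - a * e k))
          = (-1) * ((wp - a * e k) * (wm - a * e k)) := fun k => by ring
      rw [Finset.prod_congr rfl (fun k _ => hneg k), Finset.prod_mul_distrib,
        Finset.prod_const, Finset.card_univ, ZMod.card, Finset.prod_mul_distrib, hP1 wp, hP1 wm]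
    have hsq : ((-1:ℂ) ^ N) * ((-1:ℂ) ^ N) = 1 := by
      rw [← pow_add]
      exact Even.neg_one_pow ⟨N, rfl⟩
    have hfin2 : a ^ N * (-1) * ∏ k : ZMod N, lam k = (wp ^ N - a ^ N) * (wm ^ N - a ^ N) := by
      calc a ^ N * (-1) * ∏ k : ZMod N, lam k
          = a ^ N * ((-1:ℂ) ^ N * ∏ k : ZMod N, e k) * ∏ k : ZMod N, lam k := by rw [hPe]
        _ = (-1:ℂ) ^ N * ((a ^ N * ∏ k : ZMod N, e k) * ∏ k : ZMod N, lam k) := by ring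
        _ = (-1:ℂ) ^ N * ((∏ k : ZMod N, (a * e k)) * ∏ k : ZMod N, lam k) := by rw [hPa]
        _ = (-1:ℂ) ^ N * ((-1:ℂ) ^ N * ((wp ^ N - a ^ N) * (wm ^ N - a ^ N))) := by rw [hmain]
        _ = (wp ^ N - a ^ N) * (wm ^ N - a ^ N) := by rw [← mul_assoc, hsq, one_mul]
    have hprodpm : wp ^ N * wm ^ N = a ^ N * b ^ N := by rw [← mul_pow, hpm, mul_pow]
    have hcp : (((1 + Real.sqrt (1 - 4 / (2 + κ) ^ 2)) / 2 : ℝ) : ℂ) = wp := by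
      rw [hwp, ← hs]
      push_cast
      ring
    have hcm : (((1 - Real.sqrt (1 - 4 / (2 + κ) ^ 2)) / 2 : ℝ) : ℂ) = wm := by
      rw [hwm, ← hs]
      push_cast
      ring
    rw [hcp, hcm]
    apply mul_right_cancel₀ (pow_ne_zero N ha0)
    linear_combination -hfin2 - hprodpm
  have hfin : a ^ N + b ^ N
      = 2 * Complex.cos (2 * Real.pi * N * ω) / ((2 : ℂ) + κ) ^ N := by
    rw [ha, hb, div_pow, div_pow, ← Complex.exp_nat_mul, ← Complex.exp_nat_mul, Complex.cos]
    have h1 : (N : ℂ) * (2 * Real.pi * Complex.I * ω)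
        = (2 * (Real.pi : ℂ) * N * ω) * Complex.I := by ring
    have h2 : (N : ℂ) * (-(2 * Real.pi * Complex.I * ω))
        = -((2 * (Real.pi : ℂ) * N * ω) * Complex.I) := by ring
    rw [h1, h2]
    ring
  rw [hdet, hprod]
  push_cast
  linear_combination -hfin
end

section
/- Fix k > 0. For κ > 0 set w_±(κ) = (1 ± √(1 − 4/(2+κ)²))/2 and C_N(κ) = (2+κ)^N ( w_+(κ)^N + w_-(κ)^N ) − 2. Then lim_{N→∞} C_N(k/N²) = 2(cosh(√k) − 1). -/
open Filter Real

/-- If `x N → c` and `x N ≠ 0` eventually, then `(1 + x N / N)^N → exp c`. -/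
lemma aux_one_add_div_pow (x : ℕ → ℝ) (c : ℝ)
    (hx : Tendsto x atTop (nhds c)) (hne : ∀ᶠ N in atTop, x N ≠ 0) :
    Tendsto (fun N : ℕ => (1 + x N / (N : ℝ)) ^ N) atTop (nhds (Real.exp c)) := by
  have hu : Tendsto (fun N : ℕ => x N / (N : ℝ)) atTop (nhds 0) := by
    simpa [div_eq_mul_inv] using hx.mul tendsto_inv_atTop_nhds_zero_nat
  have hune : ∀ᶠ N : ℕ in atTop, x N / (N : ℝ) ≠ 0 := by
    filter_upwards [hne, eventually_ge_atTop 1] with N h1 h2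
    have : (N : ℝ) ≠ 0 := by positivity
    exact div_ne_zero h1 this
  have hu' : Tendsto (fun N : ℕ => x N / (N : ℝ)) atTop (nhdsWithin 0 {(0 : ℝ)}ᶜ) :=
    tendsto_nhdsWithin_of_tendsto_nhds_of_eventually_within _ hu hune
  -- derivative of log(1+t) at 0 is 1
  have hderiv : HasDerivAt (fun t : ℝ => Real.log (1 + t)) 1 0 := by
    have h1 : HasDerivAt (fun t : ℝ => 1 + t) 1 0 := by
      simpa using (hasDerivAt_id (0 : ℝ)).const_add 1
    simpa using h1.log (by norm_num)
  have hslope : Tendsto (fun t : ℝ => Real.log (1 + t) / t)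
      (nhdsWithin 0 {(0 : ℝ)}ᶜ) (nhds 1) := by
    have := (hasDerivAt_iff_tendsto_slope).mp hderiv
    refine this.congr' ?_
    filter_upwards with t
    simp [slope_fun_def, Real.log_one, div_eq_inv_mul]
  have hcomp : Tendsto (fun N : ℕ => Real.log (1 + x N / (N : ℝ)) / (x N / (N : ℝ)))
      atTop (nhds 1) := hslope.comp hu'
  have hmul : Tendsto
      (fun N : ℕ => x N * (Real.log (1 + x N / (N : ℝ)) / (x N / (N : ℝ))))
      atTop (nhds (c * 1)) := hx.mul hcomp
  have hlog : Tendsto (fun N : ℕ => (N : ℝ) * Real.log (1 + x N / (N : ℝ)))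
      atTop (nhds c) := by
    rw [show c = c * 1 by ring]
    refine hmul.congr' ?_
    filter_upwards [hne, eventually_ge_atTop 1] with N h1 h2
    have hN : (N : ℝ) ≠ 0 := by positivity
    field_simp
  have hexp : Tendsto (fun N : ℕ => Real.exp ((N : ℝ) * Real.log (1 + x N / (N : ℝ))))
      atTop (nhds (Real.exp c)) := (Real.continuous_exp.tendsto c).comp hlog
  have hpos : ∀ᶠ N : ℕ in atTop, 0 < 1 + x N / (N : ℝ) := by
    have h1 : Tendsto (fun N : ℕ => 1 + x N / (N : ℝ)) atTop (nhds 1) := by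
      simpa using (tendsto_const_nhds (x := (1:ℝ)) (f := atTop)).add hu
    exact h1.eventually (eventually_gt_nhds (by norm_num))
  refine hexp.congr' ?_
  filter_upwards [hpos] with N hp
  rw [Real.exp_nat_mul, Real.exp_log hp]

/-- Continuum limit of `C_N(κ) = (2+κ)^N (w₊(κ)^N + w₋(κ)^N) - 2` along the scaling
`κ = k/N²`: it converges to `2(cosh(√k) - 1)`. -/
theorem circle_CN_limit (k : ℝ) (hk : 0 < k) :
    Filter.Tendsto
      (fun N : ℕ =>
        (2 + k / (N : ℝ) ^ 2) ^ N *
            (((1 + Real.sqrt (1 - 4 / (2 + k / (N : ℝ) ^ 2) ^ 2)) / 2) ^ N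
              + ((1 - Real.sqrt (1 - 4 / (2 + k / (N : ℝ) ^ 2) ^ 2)) / 2) ^ N)
          - 2)
      Filter.atTop
      (nhds (2 * (Real.cosh (Real.sqrt k) - 1))) := by
  set s := Real.sqrt k with hs
  -- the sequences x₊ and x₋
  set xp : ℕ → ℝ := fun N => k / (2 * (N : ℝ)) + Real.sqrt (k ^ 2 / (N : ℝ) ^ 2 + 4 * k) / 2
    with hxp
  set xm : ℕ → ℝ := fun N => k / (2 * (N : ℝ)) - Real.sqrt (k ^ 2 / (N : ℝ) ^ 2 + 4 * k) / 2
    with hxm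
  have h0 : Tendsto (fun N : ℕ => k / (2 * (N : ℝ))) atTop (nhds 0) := by
    have := (tendsto_const_nhds (x := (k/2 : ℝ)) (f := atTop)).mul
      tendsto_inv_atTop_nhds_zero_nat
    simpa [div_eq_mul_inv, mul_inv, mul_comm, mul_assoc, mul_left_comm] using this
  have hsq : Tendsto (fun N : ℕ => Real.sqrt (k ^ 2 / (N : ℝ) ^ 2 + 4 * k) / 2) atTop
      (nhds s) := by
    have h1 : Tendsto (fun N : ℕ => k ^ 2 / (N : ℝ) ^ 2 + 4 * k) atTop (nhds (4 * k)) := by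
      have h2 : Tendsto (fun N : ℕ => k ^ 2 / (N : ℝ) ^ 2) atTop (nhds 0) := by
        have := ((tendsto_const_nhds (x := (k : ℝ)) (f := atTop)).mul
          tendsto_inv_atTop_nhds_zero_nat).pow 2
        simpa [div_eq_mul_inv, mul_pow] using this
      simpa using h2.add (tendsto_const_nhds (x := (4*k : ℝ)))
    have h3 : Tendsto (fun N : ℕ => Real.sqrt (k ^ 2 / (N : ℝ) ^ 2 + 4 * k)) atTop
        (nhds (Real.sqrt (4 * k))) := (Real.continuous_sqrt.tendsto _).comp h1
    have h4 : Real.sqrt (4 * k) = 2 * s := by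
      rw [hs, show (4 : ℝ) = 2 ^ 2 by norm_num,
        Real.sqrt_mul (by positivity) k, Real.sqrt_sq (by norm_num : (0:ℝ) ≤ 2)]
    rw [show s = 2 * s / 2 by ring]
    exact (h4 ▸ h3).div_const 2
  have hTp : Tendsto xp atTop (nhds s) := by simpa using h0.add hsq
  have hTm : Tendsto xm atTop (nhds (-s)) := by simpa using h0.sub hsq
  have hnep : ∀ᶠ N in atTop, xp N ≠ 0 := by
    filter_upwards [eventually_ge_atTop 1] with N hN
    have hN0 : (0:ℝ) < (N : ℝ) := by exact_mod_cast hN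
    have : 0 < xp N := by
      have : 0 < k / (2 * (N : ℝ)) := by positivity
      have h2 : 0 ≤ Real.sqrt (k ^ 2 / (N : ℝ) ^ 2 + 4 * k) / 2 := by positivity
      simp only [hxp]; linarith
    exact ne_of_gt this
  have hnem : ∀ᶠ N in atTop, xm N ≠ 0 := by
    filter_upwards [eventually_ge_atTop 1] with N hN
    have hN0 : (0:ℝ) < (N : ℝ) := by exact_mod_cast hN
    have hlt : k / (N : ℝ) < Real.sqrt (k ^ 2 / (N : ℝ) ^ 2 + 4 * k) := by
      rw [Real.lt_sqrt (by positivity)]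
      have : (k / (N:ℝ)) ^ 2 = k ^ 2 / (N:ℝ) ^ 2 := by rw [div_pow]
      rw [this]; linarith
    have : xm N < 0 := by
      simp only [hxm]
      have : k / (2 * (N : ℝ)) = (k / (N:ℝ)) / 2 := by ring
      rw [this]; linarith
    exact ne_of_lt this
  have Ap := aux_one_add_div_pow xp s hTp hnep
  have Am := aux_one_add_div_pow xm (-s) hTm hnem
  have hsum : Tendsto
      (fun N : ℕ => (1 + xp N / (N : ℝ)) ^ N + (1 + xm N / (N : ℝ)) ^ N - 2)
      atTop (nhds (Real.exp s + Real.exp (-s) - 2)) := (Ap.add Am).sub_const 2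
  have hval : Real.exp s + Real.exp (-s) - 2 = 2 * (Real.cosh s - 1) := by
    rw [Real.cosh_eq]; ring
  rw [← hval]
  refine hsum.congr' ?_
  filter_upwards [eventually_ge_atTop 1] with N hN
  have hN0 : (0:ℝ) < (N : ℝ) := by exact_mod_cast hN
  set n : ℝ := (N : ℝ)
  set κ : ℝ := k / n ^ 2 with hκ
  have hκpos : 0 < κ := by positivity
  have hA : (0:ℝ) < 2 + κ := by linarith
  -- key identity: (2+κ) √(1 - 4/(2+κ)²) = √(k²/n² + 4k) / n
  have key : (2 + κ) * Real.sqrt (1 - 4 / (2 + κ) ^ 2)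
      = Real.sqrt (k ^ 2 / n ^ 2 + 4 * k) / n := by
    have h1 : (2 + κ) * Real.sqrt (1 - 4 / (2 + κ) ^ 2)
        = Real.sqrt ((2 + κ) ^ 2 * (1 - 4 / (2 + κ) ^ 2)) := by
      rw [Real.sqrt_mul (by positivity), Real.sqrt_sq hA.le]
    have h2 : (2 + κ) ^ 2 * (1 - 4 / (2 + κ) ^ 2) = (k ^ 2 / n ^ 2 + 4 * k) / n ^ 2 := by
      rw [hκ]; field_simp; ring
    rw [h1, h2, Real.sqrt_div (by positivity), Real.sqrt_sq hN0.le]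
  have hn : n ≠ 0 := ne_of_gt hN0
  have key2 : Real.sqrt (1 - 4 / (2 + κ) ^ 2)
      = Real.sqrt (k ^ 2 / n ^ 2 + 4 * k) / (n * (2 + κ)) := by
    rw [eq_div_iff (by positivity)]
    have h := congrArg (fun y => y * n) key
    simp only [div_mul_cancel₀ _ hn] at h
    linear_combination h
  have e1 : (2 + κ) * ((1 + Real.sqrt (1 - 4 / (2 + κ) ^ 2)) / 2) = 1 + xp N / n := by
    have hx : xp N = k / (2 * n) + Real.sqrt (k ^ 2 / n ^ 2 + 4 * k) / 2 := rfl
    rw [hx, key2, hκ]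
    field_simp
    ring
  have e2 : (2 + κ) * ((1 - Real.sqrt (1 - 4 / (2 + κ) ^ 2)) / 2) = 1 + xm N / n := by
    have hx : xm N = k / (2 * n) - Real.sqrt (k ^ 2 / n ^ 2 + 4 * k) / 2 := rfl
    rw [hx, key2, hκ]
    field_simp
    ring
  calc (1 + xp N / n) ^ N + (1 + xm N / n) ^ N - 2
      = ((2 + κ) * ((1 + Real.sqrt (1 - 4 / (2 + κ) ^ 2)) / 2)) ^ N
        + ((2 + κ) * ((1 - Real.sqrt (1 - 4 / (2 + κ) ^ 2)) / 2)) ^ N - 2 := by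
        rw [e1, e2]
    _ = (2 + κ) ^ N * (((1 + Real.sqrt (1 - 4 / (2 + κ) ^ 2)) / 2) ^ N
        + ((1 - Real.sqrt (1 - 4 / (2 + κ) ^ 2)) / 2) ^ N) - 2 := by
        rw [mul_pow, mul_pow, mul_add]
end

section
/- Let α > 0, s > 0, q = e^{−s}, and j ∈ ℤ. For m ∈ ℕ let p_m = (Γ(α+m)/(Γ(α) m!)) (1−q)^α q^m be the negative binomial probability mass function with parameters (α, q), and set p_m = 0 for m < 0. Then ∫_0^1 ( (cosh(s) − 1)/(cosh(s) − cos(2πω)) )^α e^{−2πi j ω} dω = Σ_{m=0}^∞ p_m p_{m+j}. In particular, the left-hand side is the probability that X − Y = j for X, Y independent, each negative binomial with parameters (α, e^{−s}). -/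
/-!
With `q = e^{-s}` one has `2q (cosh s - cos θ) = |1 - q e^{iθ}|²`, so the integrand is `|φ(ω)|²`
for `φ(ω) = (1 - q)^α (1 - q e^{2πiω})^{-α}`. By the binomial series, `φ(ω) = Σ_m p_m e^{2πimω}`
(the characteristic function of the negative binomial law), and the series converges absolutely.
Expanding `φ · conj φ` as a double series and integrating termwise against `e^{-2πijω}`,
orthogonality of the exponentials on `[0, 1]` keeps exactly the pairs `(n + j, n)`.
-/

open Complex ComplexConjugate
open scoped Nat Real

theorem Complex.choose_add_sub_one_eq_Gamma {a : ℂ} (ha : ∀ k : ℕ, a ≠ -k) (n : ℕ) :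
    Ring.choose (a + n - 1) n = Gamma (a + n) / (Gamma a * n !) := by
  rw [Ring.choose_eq_smul, Polynomial.descPochhammer_smeval_eq_ascPochhammer,
    show a + n - 1 - n + 1 = a by ring, Polynomial.ascPochhammer_smeval_eq_eval,
    ← Gamma_add_nat_div_Gamma_eq a ha, smul_eq_mul]
  field_simp

theorem Complex.hasSum_Gamma_div_mul_pow {a : ℂ} (ha : ∀ k : ℕ, a ≠ -k) {z : ℂ} (hz : ‖z‖ < 1) :
    HasSum (fun n : ℕ => Gamma (a + n) / (Gamma a * n !) * z ^ n) ((1 - z) ^ (-a)) := by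
  have h := (one_div_one_sub_cpow_hasFPowerSeriesOnBall_zero a).hasSum
    (y := z) (by simpa [← ofReal_norm] using hz)
  simpa [FormalMultilinearSeries.ofScalars_apply_eq, choose_add_sub_one_eq_Gamma ha, mul_comm,
    cpow_neg] using h

theorem hasSum_negBinomial_mul_exp {α q : ℝ} (hα : 0 < α) (hq₀ : 0 ≤ q) (hq₁ : q < 1)
    {p : ℤ → ℝ}
    (hp : ∀ m : ℕ, p m = Real.Gamma (α + m) / (Real.Gamma α * m !) * (1 - q) ^ α * q ^ m)
    (hpneg : ∀ m : ℤ, m < 0 → p m = 0) (ω : ℝ) :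
    HasSum (fun m : ℤ => (p m : ℂ) * exp (2 * π * I * m * ω))
      (((1 - q) ^ α : ℝ) * (1 - q * exp (2 * π * I * ω)) ^ (-α : ℂ)) := by
  have hz : ‖(q : ℂ) * exp (2 * π * I * ω)‖ < 1 := by
    simpa [norm_exp, abs_of_nonneg hq₀] using hq₁
  have hα' : ∀ k : ℕ, (α : ℂ) ≠ -k := fun k h => by
    have := congrArg re h
    simp only [ofReal_re, neg_re, natCast_re] at this
    linarith [(Nat.cast_nonneg k : (0 : ℝ) ≤ k)]
  have hsupp : ∀ m ∉ Set.range ((↑) : ℕ → ℤ), (p m : ℂ) * exp (2 * π * I * m * ω) = 0 := by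
    intro m hm
    rw [hpneg m (by simpa using hm), ofReal_zero, zero_mul]
  rw [← Nat.cast_injective.hasSum_iff hsupp]
  refine ((hasSum_Gamma_div_mul_pow hα' hz).mul_left (((1 - q) ^ α : ℝ) : ℂ)).congr_fun
    fun m => ?_
  simp only [Function.comp_apply, hp, Int.cast_natCast, mul_pow, ← exp_nat_mul, ofReal_mul,
    ofReal_div, ← Gamma_ofReal]
  push_cast
  ring_nf

theorem Complex.normSq_one_sub_exp_neg_mul_exp (s θ : ℝ) :
    normSq (1 - Real.exp (-s) * exp (θ * I)) = 2 * Real.exp (-s) * (Real.cosh s - Real.cos θ) := by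
  rw [exp_mul_I, ← ofReal_cos, ← ofReal_sin, normSq_apply]
  simp only [sub_re, sub_im, add_re, add_im, mul_re, mul_im, one_re, one_im, ofReal_re, ofReal_im,
    I_re, I_im]
  rw [Real.cosh_eq]
  have hs : Real.exp (-s) * Real.exp s = 1 := by rw [← Real.exp_add]; simp
  linear_combination (Real.exp (-s)) ^ 2 * Real.sin_sq_add_cos_sq θ - hs

theorem Complex.ofReal_rpow_sq_div_normSq {r : ℝ} (hr : 0 ≤ r) (z : ℂ) (α : ℝ) :
    (((r ^ 2 / normSq z) ^ α : ℝ) : ℂ)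
      = ((r ^ α : ℝ) * z ^ (-α : ℂ)) * conj ((r ^ α : ℝ) * z ^ (-α : ℂ)) := by
  rw [mul_conj, normSq_eq_norm_sq, normSq_eq_norm_sq, norm_mul, norm_real,
    Real.norm_of_nonneg (by positivity), ← ofReal_neg, norm_cpow_real, mul_pow,
    Real.rpow_pow_comm hr, Real.rpow_pow_comm (norm_nonneg z), Real.rpow_neg (by positivity),
    Real.div_rpow (by positivity) (by positivity), div_eq_mul_inv]

theorem ofReal_rpow_cosh_sub_one_div_cosh_sub_cos {s : ℝ} (hs : 0 ≤ s) (α θ : ℝ) :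
    ((((Real.cosh s - 1) / (Real.cosh s - Real.cos θ)) ^ α : ℝ) : ℂ)
      = (((1 - Real.exp (-s)) ^ α : ℝ) * (1 - Real.exp (-s) * exp (θ * I)) ^ (-α : ℂ))
        * conj (((1 - Real.exp (-s)) ^ α : ℝ) * (1 - Real.exp (-s) * exp (θ * I)) ^ (-α : ℂ)) := by
  have h₀ := normSq_one_sub_exp_neg_mul_exp s 0
  rw [ofReal_zero, zero_mul, Complex.exp_zero, mul_one, ← ofReal_one, ← ofReal_sub, normSq_ofReal,
    Real.cos_zero] at h₀
  have hq : 0 ≤ 1 - Real.exp (-s) := sub_nonneg.mpr (Real.exp_le_one_iff.mpr (by linarith))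
  rw [← ofReal_rpow_sq_div_normSq hq, normSq_one_sub_exp_neg_mul_exp, sq, h₀,
    mul_div_mul_left _ _ (by positivity)]

theorem integral_exp_two_pi_I_int_mul (k : ℤ) :
    ∫ ω in (0:ℝ)..1, exp (2 * π * I * k * ω) = if k = 0 then 1 else 0 := by
  split_ifs with hk
  · simp [hk]
  have hc : 2 * π * I * k ≠ 0 := by simp [I_ne_zero, hk]
  rw [integral_exp_mul_complex hc]
  simp only [ofReal_one, ofReal_zero, mul_one, mul_zero, Complex.exp_zero]
  rw [show 2 * π * I * k = k * (2 * π * I) by ring, exp_int_mul_two_pi_mul_I, sub_self, zero_div]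

theorem hasSum_prod_ite_sub_eq_iff {M : Type*} [AddCommMonoid M] [TopologicalSpace M]
    (b : ℤ → ℤ → M) (j : ℤ) {S : M} :
    HasSum (fun mn : ℤ × ℤ => if mn.1 - mn.2 = j then b mn.1 mn.2 else 0) S
      ↔ HasSum (fun n : ℤ => b (n + j) n) S := by
  have hinj : Function.Injective fun n : ℤ => (n + j, n) := fun n n' h => (Prod.ext_iff.mp h).2
  have hsupp : ∀ mn ∉ Set.range fun n : ℤ => (n + j, n),
      (if mn.1 - mn.2 = j then b mn.1 mn.2 else 0) = 0 := by
    rintro ⟨m, n⟩ hmn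
    refine if_neg fun h => hmn ⟨n, ?_⟩
    simp only [Prod.mk.injEq, and_true]
    omega
  simpa [Function.comp_def] using (hinj.hasSum_iff hsupp).symm

theorem hasSum_mul_conj_mul_exp_sub {a : ℤ → ℂ} (ha : Summable fun m => ‖a m‖) {ω : ℝ} {z : ℂ}
    (hz : HasSum (fun m : ℤ => a m * exp (2 * π * I * m * ω)) z) (j : ℤ) :
    HasSum (fun mn : ℤ × ℤ =>
        a mn.1 * conj (a mn.2) * exp (2 * π * I * ((mn.1 - mn.2 - j : ℤ) : ℂ) * ω))
      (z * conj z * exp (-(2 * π * I * j * ω))) := by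
  have hconj : HasSum (fun n : ℤ => conj (a n) * exp (-(2 * π * I * n * ω))) (conj z) := by
    convert hasSum_conj'.mpr hz using 2 with n
    simp [← exp_conj, map_ofNat]
  have h₁ : Summable fun m : ℤ => ‖a m * exp (2 * π * I * m * ω)‖ := by simpa [norm_exp] using ha
  have h₂ : Summable fun n : ℤ => ‖conj (a n) * exp (-(2 * π * I * n * ω))‖ := by
    simpa [norm_exp] using ha
  have h₁₂ : Summable fun mn : ℤ × ℤ => a mn.1 * exp (2 * π * I * mn.1 * ω)
      * (conj (a mn.2) * exp (-(2 * π * I * mn.2 * ω))) :=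
    summable_mul_of_summable_norm (f := fun m : ℤ => a m * exp (2 * π * I * m * ω))
      (g := fun n : ℤ => conj (a n) * exp (-(2 * π * I * n * ω))) h₁ h₂
  refine ((hz.mul hconj h₁₂).mul_right (exp (-(2 * π * I * j * ω)))).congr_fun fun mn => ?_
  have hexp : exp (2 * π * I * ((mn.1 - mn.2 - j : ℤ) : ℂ) * ω) = exp (2 * π * I * mn.1 * ω)
      * exp (-(2 * π * I * mn.2 * ω)) * exp (-(2 * π * I * j * ω)) := by
    rw [← exp_add, ← exp_add]
    push_cast
    ring_nf
  rw [hexp]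
  ring

theorem hasSum_integral_mul_conj_mul_exp {a : ℤ → ℂ} (ha : Summable a) {f : ℝ → ℂ}
    (hf : ∀ ω : ℝ, HasSum (fun m : ℤ => a m * exp (2 * π * I * m * ω)) (f ω)) (j : ℤ) :
    HasSum (fun n : ℤ => a (n + j) * conj (a n))
      (∫ ω in (0:ℝ)..1, f ω * conj (f ω) * exp (-(2 * π * I * j * ω))) := by
  have ha' : Summable fun m => ‖a m‖ := summable_norm_iff.mpr ha
  have hsum : HasSum (fun mn : ℤ × ℤ => ∫ ω in (0:ℝ)..1,
        a mn.1 * conj (a mn.2) * exp (2 * π * I * ((mn.1 - mn.2 - j : ℤ) : ℂ) * ω))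
      (∫ ω in (0:ℝ)..1, f ω * conj (f ω) * exp (-(2 * π * I * j * ω))) :=
    intervalIntegral.hasSum_integral_of_dominated_convergence (fun mn _ => ‖a mn.1‖ * ‖a mn.2‖) (fun mn => by fun_prop)
    (fun mn => .of_forall fun ω _ => by simp [norm_exp])
    (.of_forall fun _ _ => (ha'.mul_norm ha').congr fun _ => norm_mul _ _)
    intervalIntegrable_const (.of_forall fun ω _ => hasSum_mul_conj_mul_exp_sub ha' (hf ω) j)
  simp only [intervalIntegral.integral_const_mul, integral_exp_two_pi_I_int_mul, sub_eq_zero,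
    mul_ite, mul_one, mul_zero] at hsum
  exact (hasSum_prod_ite_sub_eq_iff (fun m n => a m * conj (a n)) j).mp hsum

/-- The distribution of the random homology of the Brownian loop ensemble on the circle:
`∫₀¹ ((cosh s - 1)/(cosh s - cos 2πω))^α e^{-2πijω} dω = Σ_{m≥0} p_m p_{m+j}`,
where `p` is the negative binomial mass function with parameters `(α, e^{-s})`
(extended by `0` to negative integers); i.e. the integral is the probability that the
difference of two independent negative binomial variables equals `j`. -/
theorem homology_distribution_negative_binomial
    (α : ℝ) (hα : 0 < α) (s : ℝ) (hs : 0 < s) (j : ℤ)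
    (p : ℤ → ℝ)
    (hp : ∀ m : ℕ, p m =
      Real.Gamma (α + m) / (Real.Gamma α * Nat.factorial m)
        * (1 - Real.exp (-s)) ^ α * Real.exp (-s) ^ m)
    (hpneg : ∀ m : ℤ, m < 0 → p m = 0) :
    (∫ ω in (0:ℝ)..1,
        ((((Real.cosh s - 1) / (Real.cosh s - Real.cos (2 * Real.pi * ω))) ^ α : ℝ) : ℂ)
          * Complex.exp (-(2 * Real.pi * Complex.I * j * ω)))
      = ((∑' m : ℕ, p m * p (m + j) : ℝ) : ℂ) := by
  have hF := hasSum_negBinomial_mul_exp hα (Real.exp_pos (-s)).le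
    (Real.exp_lt_one_iff.mpr (by linarith)) hp hpneg
  have ha : Summable fun m : ℤ => (p m : ℂ) := by simpa using (hF 0).summable
  have hangle : ∀ ω : ℝ, ((2 * π * ω : ℝ) : ℂ) * I = 2 * π * I * ω := fun ω => by push_cast; ring
  simp_rw [ofReal_rpow_cosh_sub_one_div_cosh_sub_cos hs.le, hangle]
  rw [← (hasSum_integral_mul_conj_mul_exp ha hF j).tsum_eq]
  simp only [conj_ofReal, ← ofReal_mul, ← ofReal_tsum]
  congr 1
  rw [← Nat.cast_injective.tsum_eq (f := fun n : ℤ => p (n + j) * p n)]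
  · simp [mul_comm]
  · intro n hn
    by_contra h
    exact hn (mul_eq_zero_of_right _ (hpneg n (by simpa using h)))
end
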